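/- arXiv:0903.0454 — 2 statements merged into one kernel-verified Lean document; each statement's English description precedes it below -/
import Mathlib

section
/- Let B be an alternating symmetric bilinear form over 𝔽₂ and d₁,…,d_g, e₁,…,e_g vectors with B(d_i, d_j) = 0 and B(e_i, e_j) = 0 for all i, j, and B(d₁, e₁) = 1. Let γ = d₁ + e₁ and d'_i = T_γ(d_i) = d_i + B(γ, d_i)γ. Then: (a) B(d'_1, e_j) = 0 for all j; (b) B(d'_i, e₁) = 0 for all i; (c) for i, j ≥ 2, B(d'_i, e_j) = B(d_i, e_j) + B(d_i, e₁)·B(d₁, e_j). -/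
theorem LinearMap.transvection_pairing {R M : Type*} [CommSemiring R] [AddCommMonoid M]
    [Module R M] (B : M →ₗ[R] M →ₗ[R] R) (γ x y : M) :
    B (x + B γ x • γ) y = B x y + B γ x * B γ y := by
  rw [map_add, map_smul, LinearMap.add_apply, LinearMap.smul_apply, smul_eq_mul]

/-- Index 0 plays the role of the paper's subscript 1. -/
theorem stmt_11_general {V : Type*} [AddCommGroup V] [Module (ZMod 2) V]
    (B : V →ₗ[ZMod 2] V →ₗ[ZMod 2] ZMod 2)
    (hsymm : ∀ x y : V, B x y = B y x)
    (g : ℕ) (d e : Fin (g + 1) → V)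
    (hd : ∀ i j, B (d i) (d j) = 0)
    (he : ∀ i j, B (e i) (e j) = 0)
    (h1 : B (d 0) (e 0) = 1)
    (γ : V) (hγ : γ = d 0 + e 0)
    (d' : Fin (g + 1) → V) (hd' : ∀ i, d' i = d i + B γ (d i) • γ) :
    (∀ j, B (d' 0) (e j) = 0) ∧
    (∀ i, B (d' i) (e 0) = 0) ∧
    (∀ i j, i ≠ 0 → j ≠ 0 →
      B (d' i) (e j) = B (d i) (e j) + B (d i) (e 0) * B (d 0) (e j)) := by
  have hγd : ∀ i, B γ (d i) = B (d i) (e 0) := fun i => by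
    rw [hγ, map_add, LinearMap.add_apply, hd, zero_add, hsymm]
  have hγe : ∀ j, B γ (e j) = B (d 0) (e j) := fun j => by
    rw [hγ, map_add, LinearMap.add_apply, he, add_zero]
  have key : ∀ i j, B (d' i) (e j) = B (d i) (e j) + B (d i) (e 0) * B (d 0) (e j) :=
    fun i j => by rw [hd', LinearMap.transvection_pairing, hγd, hγe]
  refine ⟨fun j => ?_, fun i => ?_, fun i j _ _ => key i j⟩
  · rw [key, h1, one_mul, CharTwo.add_self_eq_zero]
  · rw [key, h1, mul_one, CharTwo.add_self_eq_zero]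

/-- Full mod-2 homology statement of Lemma 4.5: after the twist along
γ = d₁ + e₁, all pairings involving d₁ or e₁ vanish and the remaining pairings
change by B(d_i,e₁)·B(d₁,e_j). (Index 0 plays the role of the subscript 1.) -/
theorem stmt_11 {V : Type*} [AddCommGroup V] [Module (ZMod 2) V]
    (B : V →ₗ[ZMod 2] V →ₗ[ZMod 2] ZMod 2)
    (hsymm : ∀ x y : V, B x y = B y x)
    (halt : ∀ v : V, B v v = 0)
    (g : ℕ) (d e : Fin (g + 1) → V)
    (hd : ∀ i j, B (d i) (d j) = 0)
    (he : ∀ i j, B (e i) (e j) = 0)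
    (h1 : B (d 0) (e 0) = 1)
    (γ : V) (hγ : γ = d 0 + e 0)
    (d' : Fin (g + 1) → V) (hd' : ∀ i, d' i = d i + B γ (d i) • γ) :
    (∀ j, B (d' 0) (e j) = 0) ∧
    (∀ i, B (d' i) (e 0) = 0) ∧
    (∀ i j, i ≠ 0 → j ≠ 0 →
      B (d' i) (e j) = B (d i) (e j) + B (d i) (e 0) * B (d 0) (e j)) :=
  stmt_11_general B hsymm g d e hd he h1 γ hγ d' hd'
end

section
/- Let M be a nonzero g×g matrix over 𝔽₂. Then there exists a sequence of at most g 'pivot operations' (choose (i,j) with M_{ij}=1, replace M by M' where M'_{ik}=0 for all k, M'_{kj}=0 for all k, and M'_{kl} = M_{kl} + M_{kj}M_{il} for k≠i, l≠j) transforming M into the zero matrix. -/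
/-! Every pivot annihilates the pivot row and creates no new nonzero row, so the number of
nonzero rows drops by at least one per pivot; pivoting at any nonzero entry therefore reaches
the zero matrix after at most `g` steps. -/

/-- A Gaussian pivot operation on a square matrix over 𝔽₂: pivot at an entry
equal to 1, zeroing its row and column and updating the rest. -/
def PivotStep {g : ℕ} (M N : Matrix (Fin g) (Fin g) (ZMod 2)) : Prop :=
  ∃ i j, M i j = 1 ∧ (∀ k, N i k = 0) ∧ (∀ k, N k j = 0) ∧
    ∀ k l, k ≠ i → l ≠ j → N k l = M k l + M k j * M i l

open Finset

namespace Matrix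

variable {m n R : Type*}

/-- In characteristic 2 with `M i j = 1`, this is the Gaussian pivot at `(i, j)`. -/
def pivot [Mul R] [Add R] (M : Matrix m n R) (i : m) (j : n) : Matrix m n R :=
  fun k l => M k l + M k j * M i l

section CharTwo

variable [Ring R] [CharP R 2] {M : Matrix m n R} {i : m} {j : n}

theorem pivot_row_self (hij : M i j = 1) : (M.pivot i j).row i = 0 := by
  ext l
  simp [pivot, hij, CharTwo.add_self_eq_zero]

theorem pivot_apply_col (hij : M i j = 1) (k : m) : M.pivot i j k j = 0 := by
  simp [pivot, hij, CharTwo.add_self_eq_zero]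

end CharTwo

theorem pivot_row_of_row_eq_zero [NonUnitalNonAssocSemiring R] {M : Matrix m n R} {k : m}
    (hk : M.row k = 0) (i : m) (j : n) : (M.pivot i j).row k = 0 := by
  ext l
  have hkl (l : n) : M k l = 0 := congrFun hk l
  simp [row_apply, pivot, hkl]

def nonzeroRows [Fintype m] [Fintype n] [DecidableEq R] [Zero R] (M : Matrix m n R) :
    Finset m :=
  {k | M.row k ≠ 0}

theorem card_nonzeroRows_pivot_lt [Fintype m] [DecidableEq m] [Fintype n] [DecidableEq R]
    [Ring R] [CharP R 2] {M : Matrix m n R} {i : m} {j : n} (hij : M i j = 1) :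
    #(M.pivot i j).nonzeroRows < #M.nonzeroRows := by
  have hsub : (M.pivot i j).nonzeroRows ⊆ M.nonzeroRows.erase i := by
    intro k hk
    simp only [nonzeroRows, mem_filter, mem_univ, true_and, mem_erase] at hk ⊢
    refine ⟨?_, fun hMk => hk (pivot_row_of_row_eq_zero hMk i j)⟩
    rintro rfl
    exact hk (pivot_row_self hij)
  have : Nontrivial R := CharP.nontrivial_of_char_ne_one (v := 2) (by norm_num)
  have hi : i ∈ M.nonzeroRows := by
    simp only [nonzeroRows, mem_filter, mem_univ, true_and]
    exact fun h => one_ne_zero (hij.symm.trans (congrFun h j))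
  exact (card_le_card hsub).trans_lt (card_erase_lt_of_mem hi)

end Matrix

open Matrix

theorem pivotStep_pivot {g : ℕ} {M : Matrix (Fin g) (Fin g) (ZMod 2)} {i j : Fin g}
    (hij : M i j = 1) : PivotStep M (M.pivot i j) :=
  ⟨i, j, hij, congrFun (pivot_row_self hij), pivot_apply_col hij, fun _ _ _ _ => rfl⟩

def PivotChain {g : ℕ} (n : ℕ) (M N : Matrix (Fin g) (Fin g) (ZMod 2)) : Prop :=
  ∃ seq : ℕ → Matrix (Fin g) (Fin g) (ZMod 2),
    seq 0 = M ∧ (∀ k < n, PivotStep (seq k) (seq (k + 1))) ∧ seq n = N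

namespace PivotChain

variable {g : ℕ}

theorem refl (M : Matrix (Fin g) (Fin g) (ZMod 2)) : PivotChain 0 M M :=
  ⟨fun _ => M, rfl, fun _ hk => absurd hk (Nat.not_lt_zero _), rfl⟩

theorem cons {n : ℕ} {M N P : Matrix (Fin g) (Fin g) (ZMod 2)} (hMN : PivotStep M N)
    (hNP : PivotChain n N P) : PivotChain (n + 1) M P := by
  obtain ⟨seq, h0, hsteps, hn⟩ := hNP
  refine ⟨fun | 0 => M | k + 1 => seq k, rfl, ?_, hn⟩
  rintro (_ | k) hk
  · simpa [h0] using hMN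
  · exact hsteps k (Nat.lt_of_succ_lt_succ hk)

end PivotChain

theorem exists_pivotChain_zero {g : ℕ} (M : Matrix (Fin g) (Fin g) (ZMod 2)) :
    ∃ n ≤ #M.nonzeroRows, PivotChain n M 0 := by
  by_cases hM : M = 0
  · exact ⟨0, Nat.zero_le _, hM ▸ PivotChain.refl M⟩
  obtain ⟨i, j, hij⟩ : ∃ i j, M i j ≠ 0 := by
    by_contra! h
    exact hM (Matrix.ext h)
  have hij : M i j = 1 := Fin.eq_one_of_ne_zero _ hij
  have hlt := card_nonzeroRows_pivot_lt hij
  obtain ⟨n, hn, hchain⟩ := exists_pivotChain_zero (M.pivot i j)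
  exact ⟨n + 1, by omega, PivotChain.cons (pivotStep_pivot hij) hchain⟩
termination_by #M.nonzeroRows

theorem stmt_17_general (g : ℕ) (M : Matrix (Fin g) (Fin g) (ZMod 2)) :
    ∃ n ≤ g, ∃ seq : ℕ → Matrix (Fin g) (Fin g) (ZMod 2),
      seq 0 = M ∧ (∀ k < n, PivotStep (seq k) (seq (k + 1))) ∧ seq n = 0 := by
  obtain ⟨n, hn, hchain⟩ := exists_pivotChain_zero M
  exact ⟨n, hn.trans ((card_le_univ _).trans_eq (Fintype.card_fin g)), hchain⟩

/-- Combinatorial heart of Theorem 4.6: any nonzero g×g matrix over 𝔽₂ can be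
reduced to the zero matrix by a sequence of at most g pivot operations. -/
theorem stmt_17 (g : ℕ) (M : Matrix (Fin g) (Fin g) (ZMod 2)) (hM : M ≠ 0) :
    ∃ n ≤ g, ∃ seq : ℕ → Matrix (Fin g) (Fin g) (ZMod 2),
      seq 0 = M ∧ (∀ k < n, PivotStep (seq k) (seq (k + 1))) ∧ seq n = 0 :=
  stmt_17_general g M
end
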